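/- wK4 does not have the Craig interpolation property: there exist modal formulas φ and ψ such that φ → ψ is wK4-valid but there is no formula ι with sig(ι) ⊆ sig(φ) ∩ sig(ψ) such that both φ → ι and ι → ψ are wK4-valid. -/

import Mathlib

/-- Modal formulas built from propositional variables (indexed by ℕ),
constants ⊤, ⊥, negation, conjunction and the modal operator ◇. -/
inductive MF : Type where
  | var : ℕ → MF
  | top : MF
  | bot : MF
  | neg : MF → MF
  | and : MF → MF → MF
  | dia : MF → MF
deriving DecidableEq

namespace MF

/-- Disjunction, as an abbreviation. -/
def or (a b : MF) : MF := neg (and (neg a) (neg b))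

/-- Implication, as an abbreviation. -/
def imp (a b : MF) : MF := MF.or (neg a) b

/-- Box, as an abbreviation: □φ := ¬◇¬φ. -/
def box (a : MF) : MF := neg (dia (neg a))

/-- The (finite) set of propositional variables occurring in a formula. -/
def sig : MF → Finset ℕ
  | var n => {n}
  | top => ∅
  | bot => ∅
  | neg a => a.sig
  | and a b => a.sig ∪ b.sig
  | dia a => a.sig

/-- The set of subformulas of a formula. -/
def subf : MF → Finset MF
  | var n => {var n}
  | top => {top}
  | bot => {bot}
  | neg a => insert (neg a) (subf a)
  | and a b => insert (and a b) (subf a ∪ subf b)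
  | dia a => insert (dia a) (subf a)

/-- The number of subformulas of a formula. -/
def nsub (a : MF) : ℕ := (subf a).card

end MF

/-- A Kripke model: a binary (accessibility) relation on worlds together with
a valuation assigning to each propositional variable a set of worlds. -/
structure KModel (W : Type) where
  R : W → W → Prop
  val : ℕ → W → Prop

/-- Weak transitivity: xRy and yRz imply x = z or xRz. -/
def WTrans {W : Type} (R : W → W → Prop) : Prop :=
  ∀ x y z : W, R x y → R y z → x = z ∨ R x z

/-- The usual Kripke truth relation. -/
def Sat {W : Type} (M : KModel W) : W → MF → Prop
  | x, .var n => M.val n x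
  | _, .top => True
  | _, .bot => False
  | x, .neg a => ¬ Sat M x a
  | x, .and a b => Sat M x a ∧ Sat M x b
  | x, .dia a => ∃ y, M.R x y ∧ Sat M y a

/-- wK4-validity: truth at every point of every model based on a weakly
transitive frame. -/
def WK4Valid (φ : MF) : Prop :=
  ∀ (W : Type) (M : KModel W), WTrans M.R → ∀ x : W, Sat M x φ

/-- The cluster of a point x: C(x) = {x} ∪ {y | xRy and yRx}. -/
def cluster {W : Type} (R : W → W → Prop) (x : W) : Set W :=
  {x} ∪ {y | R x y ∧ R y x}

/-- C R C' for sets of points: xRy for some x ∈ C, y ∈ C'. -/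
def clusterRel {W : Type} (R : W → W → Prop) (C C' : Set W) : Prop :=
  ∃ x ∈ C, ∃ y ∈ C', R x y

/-- C R y for a set C and point y: xRy for some x ∈ C. -/
def clusterRelPt {W : Type} (R : W → W → Prop) (C : Set W) (y : W) : Prop :=
  ∃ x ∈ C, R x y

/-- C R^s C': C R C' and C ≠ C'. -/
def clusterRelS {W : Type} (R : W → W → Prop) (C C' : Set W) : Prop :=
  clusterRel R C C' ∧ C ≠ C'

/-- A set is a cluster if it is the cluster of some point. -/
def IsCluster {W : Type} (R : W → W → Prop) (C : Set W) : Prop :=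
  ∃ x : W, C = cluster R x

/-- A σ-model is descriptive if it satisfies (dif), (ref) and (com). -/
def Descriptive {W : Type} (σ : Finset ℕ) (M : KModel W) : Prop :=
  (∀ x y : W, (∀ φ : MF, φ.sig ⊆ σ → (Sat M x φ ↔ Sat M y φ)) → x = y) ∧
  (∀ x y : W, M.R x y ↔ ∀ χ : MF, χ.sig ⊆ σ → Sat M y χ → Sat M x (MF.dia χ)) ∧
  (∀ Γ : Set MF, (∀ φ ∈ Γ, φ.sig ⊆ σ) →
    (∀ Γ' : Finset MF, ↑Γ' ⊆ Γ → ∃ x : W, ∀ φ ∈ Γ', Sat M x φ) →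
    ∃ x : W, ∀ φ ∈ Γ, Sat M x φ)

/-- The ρ-type of a point: the set of all ρ-formulas true at it. -/
def rType {W : Type} (M : KModel W) (ρ : Finset ℕ) (x : W) : Set MF :=
  {φ : MF | φ.sig ⊆ ρ ∧ Sat M x φ}

/-- A cluster C is ρ-maximal if whenever C R y and some x ∈ C has the same
ρ-type as y, then y ∈ C. -/
def RhoMaximal {W : Type} (M : KModel W) (ρ : Finset ℕ) (C : Set W) : Prop :=
  ∀ x ∈ C, ∀ y : W, clusterRelPt M.R C y → rType M ρ x = rType M ρ y → y ∈ C

/-- β is a ρ-bisimulation between M1 and M2: conditions (atom) and (move). -/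
def IsBisim {W1 W2 : Type} (ρ : Finset ℕ) (M1 : KModel W1) (M2 : KModel W2)
    (β : W1 → W2 → Prop) : Prop :=
  ∀ x1 x2, β x1 x2 →
    (∀ n ∈ ρ, M1.val n x1 ↔ M2.val n x2) ∧
    (∀ y1, M1.R x1 y1 → ∃ y2, M2.R x2 y2 ∧ β y1 y2) ∧
    (∀ y2, M2.R x2 y2 → ∃ y1, M1.R x1 y1 ∧ β y1 y2)

/-- M1,x1 ∼ρ M2,x2 : some ρ-bisimulation relates x1 to x2. -/
def Bisimilar {W1 W2 : Type} (ρ : Finset ℕ) (M1 : KModel W1) (x1 : W1)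
    (M2 : KModel W2) (x2 : W2) : Prop :=
  ∃ β : W1 → W2 → Prop, IsBisim ρ M1 M2 β ∧ β x1 x2

/-!
Take `φ := ¬◇p ∧ □◇p` and `ψ := q → □◇q`. If `x ⊨ φ ∧ q` and `xRy`, then `y` sees some `p`-point
`z`; weak transitivity gives `x = z` or `xRz`, and `¬◇p` excludes the latter, so `y` sees `x` and
`y ⊨ ◇q`. An interpolant would be variable-free, and variable-free formulas cannot distinguish
points of serial models (the total relation is a bisimulation for the empty signature). But `φ`
holds in the two-point irreflexive cluster and `ψ` fails at `0` in `(ℕ, <)`, both serial and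
weakly transitive.
-/

namespace MF

@[simp]
lemma sat_imp {W : Type} (M : KModel W) (x : W) (a b : MF) :
    Sat M x (imp a b) ↔ (Sat M x a → Sat M x b) := by
  simp only [imp, MF.or, Sat]
  tauto

@[simp]
lemma sat_box {W : Type} (M : KModel W) (x : W) (a : MF) :
    Sat M x (box a) ↔ ∀ y, M.R x y → Sat M y a := by
  simp [box, Sat]

end MF

lemma sat_iff_of_isBisim {W1 W2 : Type} {ρ : Finset ℕ} {M1 : KModel W1} {M2 : KModel W2}
    {β : W1 → W2 → Prop} (hβ : IsBisim ρ M1 M2 β) (a : MF) (ha : a.sig ⊆ ρ) :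
    ∀ x1 x2, β x1 x2 → (Sat M1 x1 a ↔ Sat M2 x2 a) := by
  induction a with
  | var n =>
    intro x1 x2 h
    exact (hβ x1 x2 h).1 n (ha (Finset.mem_singleton_self n))
  | top | bot => simp [Sat]
  | neg a ih =>
    intro x1 x2 h
    simp only [Sat, ih ha x1 x2 h]
  | and a b iha ihb =>
    rw [MF.sig, Finset.union_subset_iff] at ha
    intro x1 x2 h
    simp only [Sat, iha ha.1 x1 x2 h, ihb ha.2 x1 x2 h]
  | dia a ih =>
    intro x1 x2 h
    obtain ⟨-, forth, back⟩ := hβ x1 x2 h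
    constructor
    · rintro ⟨y1, hxy1, hy1⟩
      obtain ⟨y2, hxy2, hy⟩ := forth y1 hxy1
      exact ⟨y2, hxy2, (ih ha y1 y2 hy).1 hy1⟩
    · rintro ⟨y2, hxy2, hy2⟩
      obtain ⟨y1, hxy1, hy⟩ := back y2 hxy2
      exact ⟨y1, hxy1, (ih ha y1 y2 hy).2 hy2⟩

def Serial {W : Type} (R : W → W → Prop) : Prop :=
  ∀ x, ∃ y, R x y

lemma isBisim_empty_of_serial {W1 W2 : Type} {M1 : KModel W1} {M2 : KModel W2}
    (h1 : Serial M1.R) (h2 : Serial M2.R) : IsBisim ∅ M1 M2 fun _ _ => True := by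
  intro x1 x2 _
  refine ⟨by simp, fun _ _ => ?_, fun _ _ => ?_⟩
  · obtain ⟨y2, hy2⟩ := h2 x2
    exact ⟨y2, hy2, trivial⟩
  · obtain ⟨y1, hy1⟩ := h1 x1
    exact ⟨y1, hy1, trivial⟩

lemma sat_iff_of_serial_of_sig_eq_empty {W1 W2 : Type} {M1 : KModel W1} {M2 : KModel W2}
    (h1 : Serial M1.R) (h2 : Serial M2.R) {a : MF} (ha : a.sig = ∅) (x1 : W1) (x2 : W2) :
    Sat M1 x1 a ↔ Sat M2 x2 a :=
  sat_iff_of_isBisim (isBisim_empty_of_serial h1 h2) a ha.subset x1 x2 trivial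

namespace CraigCounterexample

def antecedent : MF := .and (.neg (.dia (.var 0))) (.box (.dia (.var 0)))

def consequent : MF := .imp (.var 1) (.box (.dia (.var 1)))

lemma sig_antecedent_inter_sig_consequent : antecedent.sig ∩ consequent.sig = ∅ := by
  decide

lemma wK4Valid_imp_antecedent_consequent : WK4Valid (.imp antecedent consequent) := by
  intro W M hM x
  simp only [antecedent, consequent, MF.sat_imp, MF.sat_box, Sat]
  rintro ⟨hnp, hboxp⟩ hq y hxy
  obtain ⟨z, hyz, hz⟩ := hboxp y hxy
  rcases hM x y z hxy hyz with rfl | hxz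
  · exact ⟨x, hyz, hq⟩
  · exact absurd ⟨z, hxz, hz⟩ hnp

def twoCluster : KModel Bool := ⟨(· ≠ ·), fun n w => n = 0 ∧ w = true⟩

def natLt : KModel ℕ := ⟨(· < ·), fun n w => n = 1 ∧ w = 0⟩

lemma wTrans_twoCluster : WTrans twoCluster.R := by
  unfold twoCluster WTrans
  decide

lemma wTrans_natLt : WTrans natLt.R :=
  fun _ _ _ hxy hyz => .inr (hxy.trans hyz)

lemma serial_twoCluster : Serial twoCluster.R :=
  fun w => ⟨!w, by simp [twoCluster]⟩

lemma serial_natLt : Serial natLt.R :=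
  fun n => ⟨n + 1, n.lt_succ_self⟩

lemma sat_twoCluster_antecedent : Sat twoCluster true antecedent := by
  simp [antecedent, twoCluster, Sat]

lemma not_sat_natLt_consequent : ¬ Sat natLt 0 consequent := by
  simp only [consequent, MF.sat_imp, MF.sat_box, Sat, natLt]
  intro h
  obtain ⟨k, hk, -, rfl⟩ := h ⟨trivial, trivial⟩ 1 Nat.one_pos
  exact absurd hk (Nat.not_lt_zero 1)

end CraigCounterexample

open CraigCounterexample

/-- wK4 does not have the Craig interpolation property. -/
theorem stmt5 :
    ∃ φ ψ : MF, WK4Valid (MF.imp φ ψ) ∧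
      ¬ ∃ ι : MF, ι.sig ⊆ φ.sig ∩ ψ.sig ∧
        WK4Valid (MF.imp φ ι) ∧ WK4Valid (MF.imp ι ψ) := by
  refine ⟨antecedent, consequent, wK4Valid_imp_antecedent_consequent, ?_⟩
  rintro ⟨ι, hsig, hφι, hιψ⟩
  have hι_sig : ι.sig = ∅ :=
    Finset.subset_empty.mp (sig_antecedent_inter_sig_consequent ▸ hsig)
  have hι_cluster : Sat twoCluster true ι :=
    (MF.sat_imp _ _ _ _).mp (hφι _ _ wTrans_twoCluster true) sat_twoCluster_antecedent
  have hι_nat : Sat natLt 0 ι :=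
    (sat_iff_of_serial_of_sig_eq_empty serial_twoCluster serial_natLt hι_sig true 0).mp hι_cluster
  exact not_sat_natLt_consequent ((MF.sat_imp _ _ _ _).mp (hιψ _ _ wTrans_natLt 0) hι_nat)
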